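/- arXiv:1607.03842 — 3 statements merged into one kernel-verified Lean document; each statement's English description precedes it below -/
import Mathlib

section
/- Let π_sim be an optimal policy of the MDP with approximate transitions P̂. Under the assumption that ‖P*(·|x,a) - P̂(·|x,a)‖_1 ≤ e(x,a) for all (x,a), the performance loss of π_sim in the true MDP satisfies ρ(π*,P*) - ρ(π_sim,P*) ≤ (2γR_max/(1-γ)²)·‖e‖_∞. -/
/-!
Through the model, the loss telescopes as
`(ρ(π*,P*) - ρ(π*,P̂)) + (ρ(π*,P̂) - ρ(π_sim,P̂)) + (ρ(π_sim,P̂) - ρ(π_sim,P*))`.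
The middle term is `≤ 0` because `π_sim` is optimal in the model, and each outer term is a
simulation-lemma error `≤ γ R_max ‖e‖_∞ / (1 - γ)²`. The simulation lemma comes from the
resolvent identity `(1 - γP)⁻¹ - (1 - γQ)⁻¹ = (1 - γP)⁻¹ γ(P - Q) (1 - γQ)⁻¹`, read in the
`ℓ∞` operator norm (maximal absolute row sum): a stochastic matrix has norm `≤ 1`, so
`(1 - γP)⁻¹` has norm `≤ 1 / (1 - γ)` and `‖P - Q‖ ≤ ‖e‖_∞`.
-/

open Matrix

/-- Return of a deterministic policy `π` in the MDP with transition kernel `Q`,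
rewards `r`, discount `γ` and initial distribution `p0`. -/
noncomputable def mdpReturn {X A : Type*} [Fintype X] [DecidableEq X]
    (γ : ℝ) (p0 : X → ℝ) (r : X → A → ℝ) (π : X → A) (Q : X → A → X → ℝ) : ℝ :=
  p0 ⬝ᵥ ((1 - γ • Matrix.of (fun x y => Q x (π x) y))⁻¹).mulVec (fun x => r x (π x))

open scoped Matrix.Norms.Operator

namespace Matrix

variable {X : Type*} [Fintype X]

theorem linfty_opNorm_le_of_forall_sum_le {Y : Type*} [Fintype Y] {M : Matrix X Y ℝ} {c : ℝ}
    (hc : 0 ≤ c) (h : ∀ i, ∑ j, |M i j| ≤ c) : ‖M‖ ≤ c := by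
  change ‖fun i => WithLp.toLp 1 (M i)‖ ≤ c
  exact (pi_norm_le_iff_of_nonneg hc).2 fun i => by simpa [PiLp.norm_eq_of_L1] using h i

theorem linfty_opNorm_le_one_of_stochastic {P : Matrix X X ℝ} (hP₀ : ∀ x y, 0 ≤ P x y)
    (hP₁ : ∀ x, ∑ y, P x y = 1) : ‖P‖ ≤ 1 :=
  linfty_opNorm_le_of_forall_sum_le zero_le_one fun x => by
    simp_rw [abs_of_nonneg (hP₀ x _), hP₁ x, le_refl]

theorem abs_dotProduct_le (p v : X → ℝ) : |p ⬝ᵥ v| ≤ (∑ x, |p x|) * ‖v‖ := by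
  rw [Finset.sum_mul]
  refine (Finset.abs_sum_le_sum_abs _ _).trans (Finset.sum_le_sum fun x _ => ?_)
  rw [abs_mul]
  exact mul_le_mul_of_nonneg_left (norm_le_pi_norm v x) (abs_nonneg _)

variable [DecidableEq X] {γ : ℝ} {P : Matrix X X ℝ}

theorem sub_mul_norm_le_norm_one_sub_smul_mulVec (hP : ‖P‖ ≤ 1) (hγ : 0 ≤ γ) (v : X → ℝ) :
    (1 - γ) * ‖v‖ ≤ ‖(1 - γ • P) *ᵥ v‖ := by
  have hPv : ‖P *ᵥ v‖ ≤ ‖v‖ :=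
    (linfty_opNorm_mulVec P v).trans (mul_le_of_le_one_left (norm_nonneg v) hP)
  have hv : v = (1 - γ • P) *ᵥ v + γ • (P *ᵥ v) := by
    rw [sub_mulVec, one_mulVec, smul_mulVec, sub_add_cancel]
  have : ‖v‖ ≤ ‖(1 - γ • P) *ᵥ v‖ + γ * ‖v‖ :=
    calc ‖v‖ ≤ ‖(1 - γ • P) *ᵥ v‖ + ‖γ • (P *ᵥ v)‖ := by
          conv_lhs => rw [hv]
          exact norm_add_le _ _
      _ ≤ ‖(1 - γ • P) *ᵥ v‖ + γ * ‖v‖ := by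
          rw [norm_smul, Real.norm_of_nonneg hγ]
          gcongr
  linarith

theorem isUnit_one_sub_smul (hP : ‖P‖ ≤ 1) (hγ₀ : 0 ≤ γ) (hγ₁ : γ < 1) :
    IsUnit (1 - γ • P) := by
  rw [← mulVec_injective_iff_isUnit]
  intro v w hvw
  have h := sub_mul_norm_le_norm_one_sub_smul_mulVec hP hγ₀ (v - w)
  rw [mulVec_sub, hvw, sub_self, norm_zero] at h
  have : ‖v - w‖ = 0 := le_antisymm (nonpos_of_mul_nonpos_right h (by linarith)) (norm_nonneg _)
  exact sub_eq_zero.1 (norm_eq_zero.1 this)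

theorem norm_inv_one_sub_smul_mulVec_le (hP : ‖P‖ ≤ 1) (hγ₀ : 0 ≤ γ) (hγ₁ : γ < 1)
    (w : X → ℝ) : ‖(1 - γ • P)⁻¹ *ᵥ w‖ ≤ ‖w‖ / (1 - γ) := by
  have hdet := (isUnit_iff_isUnit_det _).1 (isUnit_one_sub_smul hP hγ₀ hγ₁)
  have h := sub_mul_norm_le_norm_one_sub_smul_mulVec hP hγ₀ ((1 - γ • P)⁻¹ *ᵥ w)
  rw [mulVec_mulVec, mul_nonsing_inv _ hdet, one_mulVec] at h
  rw [le_div_iff₀ (by linarith)]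
  linarith

theorem inv_one_sub_smul_sub_inv_one_sub_smul {Q : Matrix X X ℝ} (hP : IsUnit (1 - γ • P))
    (hQ : IsUnit (1 - γ • Q)) :
    (1 - γ • P)⁻¹ - (1 - γ • Q)⁻¹ = (1 - γ • P)⁻¹ * (γ • (P - Q)) * (1 - γ • Q)⁻¹ := by
  have hPQ : γ • (P - Q) = (1 - γ • Q) - (1 - γ • P) := by rw [smul_sub]; abel
  rw [hPQ, Matrix.mul_sub, Matrix.sub_mul, Matrix.mul_assoc,
    mul_nonsing_inv _ ((isUnit_iff_isUnit_det _).1 hQ), Matrix.mul_one,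
    nonsing_inv_mul _ ((isUnit_iff_isUnit_det _).1 hP), Matrix.one_mul]

theorem abs_dotProduct_inv_one_sub_smul_mulVec_sub_le {Q : Matrix X X ℝ} (hP : ‖P‖ ≤ 1)
    (hQ : ‖Q‖ ≤ 1) (hγ₀ : 0 ≤ γ) (hγ₁ : γ < 1) {p : X → ℝ} (hp : ∑ x, |p x| ≤ 1)
    (w : X → ℝ) :
    |p ⬝ᵥ (1 - γ • P)⁻¹ *ᵥ w - p ⬝ᵥ (1 - γ • Q)⁻¹ *ᵥ w|
      ≤ γ * ‖w‖ / (1 - γ) ^ 2 * ‖P - Q‖ := by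
  have h1γ : 0 < 1 - γ := by linarith
  set v := (1 - γ • Q)⁻¹ *ᵥ w
  have hdiff : p ⬝ᵥ (1 - γ • P)⁻¹ *ᵥ w - p ⬝ᵥ v
      = p ⬝ᵥ (1 - γ • P)⁻¹ *ᵥ (γ • ((P - Q) *ᵥ v)) := by
    rw [← dotProduct_sub, ← sub_mulVec, inv_one_sub_smul_sub_inv_one_sub_smul
      (isUnit_one_sub_smul hP hγ₀ hγ₁) (isUnit_one_sub_smul hQ hγ₀ hγ₁),
      ← mulVec_mulVec, ← mulVec_mulVec, smul_mulVec]
  have hv : ‖v‖ ≤ ‖w‖ / (1 - γ) := norm_inv_one_sub_smul_mulVec_le hQ hγ₀ hγ₁ w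
  rw [hdiff]
  calc _ ≤ ‖(1 - γ • P)⁻¹ *ᵥ (γ • ((P - Q) *ᵥ v))‖ :=
        (abs_dotProduct_le _ _).trans (mul_le_of_le_one_left (norm_nonneg _) hp)
    _ ≤ γ * (‖P - Q‖ * ‖v‖) / (1 - γ) := by
        refine (norm_inv_one_sub_smul_mulVec_le hP hγ₀ hγ₁ _).trans ?_
        rw [norm_smul, Real.norm_of_nonneg hγ₀]
        gcongr
        exact linfty_opNorm_mulVec _ _
    _ ≤ γ * (‖P - Q‖ * (‖w‖ / (1 - γ))) / (1 - γ) := by gcongr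
    _ = γ * ‖w‖ / (1 - γ) ^ 2 * ‖P - Q‖ := by field_simp

end Matrix

theorem abs_mdpReturn_sub_le {X A : Type*} [Fintype X] [DecidableEq X] {γ Rmax E : ℝ}
    (hγ₀ : 0 ≤ γ) (hγ₁ : γ < 1) (hR : 0 ≤ Rmax) (hE : 0 ≤ E) {p0 : X → ℝ}
    (hp0 : ∑ x, |p0 x| ≤ 1) {r : X → A → ℝ} (hr : ∀ x a, |r x a| ≤ Rmax)
    {P Q : X → A → X → ℝ} (hP : (∀ x a y, 0 ≤ P x a y) ∧ ∀ x a, ∑ y, P x a y = 1)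
    (hQ : (∀ x a y, 0 ≤ Q x a y) ∧ ∀ x a, ∑ y, Q x a y = 1)
    (hPQ : ∀ x a, ∑ y, |P x a y - Q x a y| ≤ E) (π : X → A) :
    |mdpReturn γ p0 r π P - mdpReturn γ p0 r π Q| ≤ γ * Rmax / (1 - γ) ^ 2 * E := by
  have hrπ : ‖fun x => r x (π x)‖ ≤ Rmax :=
    (pi_norm_le_iff_of_nonneg hR).2 fun x => (Real.norm_eq_abs _).trans_le (hr x (π x))
  refine (abs_dotProduct_inv_one_sub_smul_mulVec_sub_le
    (linfty_opNorm_le_one_of_stochastic (fun x => hP.1 x (π x)) fun x => hP.2 x (π x))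
    (linfty_opNorm_le_one_of_stochastic (fun x => hQ.1 x (π x)) fun x => hQ.2 x (π x))
    hγ₀ hγ₁ hp0 _).trans ?_
  gcongr
  exact linfty_opNorm_le_of_forall_sum_le hE fun x => hPQ x (π x)

theorem simulator_performance_loss_general {X A : Type*} [Fintype X] [Fintype A]
    [DecidableEq X]
    (γ Rmax : ℝ) (hγ : γ ∈ Set.Ioo (0:ℝ) 1) (hR : 0 ≤ Rmax)
    (p0 : X → ℝ) (hp0 : (∀ x, 0 ≤ p0 x) ∧ ∑ x, p0 x = 1)
    (r : X → A → ℝ) (hr : ∀ x a, |r x a| ≤ Rmax)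
    (Pstar Phat : X → A → X → ℝ)
    (hPstar : (∀ x a y, 0 ≤ Pstar x a y) ∧ ∀ x a, ∑ y, Pstar x a y = 1)
    (hPhat : (∀ x a y, 0 ≤ Phat x a y) ∧ ∀ x a, ∑ y, Phat x a y = 1)
    (e : X → A → ℝ) (he : ∀ x a, 0 ≤ e x a)
    (hdist : ∀ x a, ∑ y, |Pstar x a y - Phat x a y| ≤ e x a)
    (πstar πsim : X → A)
    (hπsim : ∀ π : X → A, mdpReturn γ p0 r π Phat ≤ mdpReturn γ p0 r πsim Phat) :
    mdpReturn γ p0 r πstar Pstar - mdpReturn γ p0 r πsim Pstar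
      ≤ 2 * γ * Rmax / (1 - γ) ^ 2 * ⨆ q : X × A, e q.1 q.2 := by
  set E := ⨆ q : X × A, e q.1 q.2
  have hE : 0 ≤ E := Real.iSup_nonneg fun q => he q.1 q.2
  have hdistE : ∀ x a, ∑ y, |Pstar x a y - Phat x a y| ≤ E := fun x a =>
    (hdist x a).trans
      (le_ciSup (f := fun q : X × A => e q.1 q.2) (Set.finite_range _).bddAbove (x, a))
  have hp0' : ∑ x, |p0 x| ≤ 1 := by simp_rw [abs_of_nonneg (hp0.1 _), hp0.2, le_refl]
  have hsim := abs_mdpReturn_sub_le hγ.1.le hγ.2 hR hE hp0' hr hPstar hPhat hdistE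
  calc _ = (mdpReturn γ p0 r πstar Pstar - mdpReturn γ p0 r πstar Phat)
        + (mdpReturn γ p0 r πstar Phat - mdpReturn γ p0 r πsim Phat)
        + (mdpReturn γ p0 r πsim Phat - mdpReturn γ p0 r πsim Pstar) := by ring
    _ ≤ γ * Rmax / (1 - γ) ^ 2 * E + 0 + γ * Rmax / (1 - γ) ^ 2 * E := by
        gcongr
        · exact (abs_le.1 (hsim πstar)).2
        · exact sub_nonpos.2 (hπsim πstar)
        · exact (le_abs_self _).trans ((abs_sub_comm _ _).trans_le (hsim πsim))
    _ = _ := by ring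

/-- performance loss of the policy optimal in the simulator. -/
theorem simulator_performance_loss {X A : Type*} [Fintype X] [Fintype A]
    [DecidableEq X] [Nonempty X] [Nonempty A]
    (γ Rmax : ℝ) (hγ : γ ∈ Set.Ioo (0:ℝ) 1) (hR : 0 ≤ Rmax)
    (p0 : X → ℝ) (hp0 : (∀ x, 0 ≤ p0 x) ∧ ∑ x, p0 x = 1)
    (r : X → A → ℝ) (hr : ∀ x a, |r x a| ≤ Rmax)
    (Pstar Phat : X → A → X → ℝ)
    (hPstar : (∀ x a y, 0 ≤ Pstar x a y) ∧ ∀ x a, ∑ y, Pstar x a y = 1)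
    (hPhat : (∀ x a y, 0 ≤ Phat x a y) ∧ ∀ x a, ∑ y, Phat x a y = 1)
    (e : X → A → ℝ) (he : ∀ x a, 0 ≤ e x a)
    (hdist : ∀ x a, ∑ y, |Pstar x a y - Phat x a y| ≤ e x a)
    (πstar πsim : X → A)
    (hπstar : ∀ π : X → A, mdpReturn γ p0 r π Pstar ≤ mdpReturn γ p0 r πstar Pstar)
    (hπsim : ∀ π : X → A, mdpReturn γ p0 r π Phat ≤ mdpReturn γ p0 r πsim Phat) :
    mdpReturn γ p0 r πstar Pstar - mdpReturn γ p0 r πsim Pstar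
      ≤ 2 * γ * Rmax / (1 - γ) ^ 2 * ⨆ q : X × A, e q.1 q.2 :=
  simulator_performance_loss_general γ Rmax hγ hR p0 hp0 r hr Pstar Phat hPstar hPhat e he hdist
    πstar πsim hπsim
end

section
/- For any policy π, the reward-adjusted return is a lower bound on robust return: min_{ξ∈Ξ(P̂,e)} ρ(π, ξ) ≥ ρ(π, ξ̃), where ξ̃ has transitions P̂ and rewards r̂(x,a) = r(x,a) - (γR_max/(1-γ)) e(x,a). -/
/-!
For an admissible kernel `Q`, the value `V = (1 - γQ)⁻¹ r` is bounded by `Rmax/(1-γ)`, so `V`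
solves the Bellman equation of `P̂` with reward `r + γ(Q - P̂)V ≥ r - γ Rmax/(1-γ) e`. The minimum
principle for `W = γ P W + w` with `P` stochastic makes the resolvent of `P̂` monotone, so `V`
dominates the reward-adjusted value pointwise; integrating against `p0 ≥ 0` bounds every return
in the infimum from below.
-/

open Matrix

namespace Matrix

variable {X : Type*} [Fintype X]

theorem abs_mulVec_apply_le (M : Matrix X X ℝ) {v : X → ℝ} {B : ℝ} (hv : ∀ y, |v y| ≤ B)
    (x : X) : |(M *ᵥ v) x| ≤ (∑ y, |M x y|) * B :=
  calc |(M *ᵥ v) x| ≤ ∑ y, |M x y * v y| := Finset.abs_sum_le_sum_abs _ _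
    _ ≤ ∑ y, |M x y| * B := Finset.sum_le_sum fun y _ => by
      rw [abs_mul]; exact mul_le_mul_of_nonneg_left (hv y) (abs_nonneg _)
    _ = (∑ y, |M x y|) * B := (Finset.sum_mul _ _ _).symm

variable [DecidableEq X] {P Q : Matrix X X ℝ} {γ : ℝ}

theorem le_mulVec_apply_of_mem_rowStochastic (hP : P ∈ rowStochastic ℝ X) {W : X → ℝ} {m : ℝ}
    (hm : ∀ y, m ≤ W y) (x : X) : m ≤ (P *ᵥ W) x :=
  calc m = ∑ y, P x y * m := by rw [← Finset.sum_mul, sum_row_of_mem_rowStochastic hP, one_mul]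
    _ ≤ ∑ y, P x y * W y :=
      Finset.sum_le_sum fun y _ => mul_le_mul_of_nonneg_left (hm y) (hP.1 x y)

-- Evaluate the equation at a minimiser of `W`.
theorem le_one_sub_mul_of_eq_smul_mulVec_add (hP : P ∈ rowStochastic ℝ X) (hγ0 : 0 ≤ γ)
    (hγ1 : γ ≤ 1) {W w : X → ℝ} {m : ℝ} (hW : W = γ • P *ᵥ W + w) (hm : ∀ y, m ≤ w y)
    (x : X) : m ≤ (1 - γ) * W x := by
  obtain ⟨x₀, -, hx₀⟩ := Finset.exists_min_image Finset.univ W ⟨x, Finset.mem_univ x⟩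
  have hmin : ∀ y, W x₀ ≤ W y := fun y => hx₀ y (Finset.mem_univ y)
  have hPW : W x₀ ≤ (P *ᵥ W) x₀ := le_mulVec_apply_of_mem_rowStochastic hP hmin x₀
  have hW₀ : W x₀ = γ * (P *ᵥ W) x₀ + w x₀ := by
    simpa [smul_mulVec] using congrFun hW x₀
  nlinarith [hm x₀, hmin x, mul_le_mul_of_nonneg_left hPW hγ0]

theorem one_sub_mul_abs_le_of_eq_smul_mulVec_add (hP : P ∈ rowStochastic ℝ X) (hγ0 : 0 ≤ γ)
    (hγ1 : γ ≤ 1) {W w : X → ℝ} {R : ℝ} (hW : W = γ • P *ᵥ W + w) (hw : ∀ y, |w y| ≤ R)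
    (x : X) : (1 - γ) * |W x| ≤ R := by
  have hnegW : -W = γ • P *ᵥ (-W) + -w := by
    rw [mulVec_neg, smul_neg, ← neg_add, ← hW]
  have hlow := le_one_sub_mul_of_eq_smul_mulVec_add hP hγ0 hγ1 hW
    (fun y => neg_le_of_abs_le (hw y)) x
  have hup := le_one_sub_mul_of_eq_smul_mulVec_add hP hγ0 hγ1 hnegW
    (fun y => neg_le_neg_iff.2 (le_of_abs_le (hw y))) x
  rw [mul_comm, ← abs_of_nonneg (sub_nonneg.2 hγ1), ← abs_mul, abs_le]
  simp only [Pi.neg_apply] at hup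
  constructor <;> linarith

theorem isUnit_one_sub_smul_of_mem_rowStochastic (hP : P ∈ rowStochastic ℝ X) (hγ0 : 0 ≤ γ)
    (hγ1 : γ < 1) : IsUnit (1 - γ • P) := by
  have hker : ∀ u v, (1 - γ • P) *ᵥ u = (1 - γ • P) *ᵥ v → ∀ x, 0 ≤ (1 - γ) * (u x - v x) := by
    intro u v huv x
    have hfix : u - v = γ • P *ᵥ (u - v) + 0 := by
      have hd : (1 - γ • P) *ᵥ (u - v) = 0 := by rw [mulVec_sub, huv, sub_self]
      rwa [sub_mulVec, one_mulVec, smul_mulVec, sub_eq_zero, ← add_zero (γ • _)] at hd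
    exact le_one_sub_mul_of_eq_smul_mulVec_add hP hγ0 hγ1.le hfix (m := 0) (fun _ => le_rfl) x
  refine mulVec_injective_iff_isUnit.1 fun u v huv => funext fun x => ?_
  nlinarith [hker u v huv x, hker v u huv.symm x]

theorem eq_smul_mulVec_add_of_isUnit (h : IsUnit (1 - γ • P)) (r : X → ℝ) :
    (1 - γ • P)⁻¹ *ᵥ r = γ • P *ᵥ ((1 - γ • P)⁻¹ *ᵥ r) + r := by
  have hinv : (1 - γ • P) *ᵥ ((1 - γ • P)⁻¹ *ᵥ r) = r := by
    rw [mulVec_mulVec, mul_nonsing_inv _ ((isUnit_iff_isUnit_det _).1 h), one_mulVec]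
  rw [sub_mulVec, one_mulVec, smul_mulVec, sub_eq_iff_eq_add'] at hinv
  exact hinv

/-- Values lie in `[-R/(1-γ), R/(1-γ)]`, so replacing `Q` by `P` at `ℓ₁`-distance `e` perturbs
the Bellman equation by at most `γ R/(1-γ) e`. -/
theorem inv_one_sub_smul_mulVec_le_of_sum_abs_sub_le (hP : P ∈ rowStochastic ℝ X) (hQ : Q ∈ rowStochastic ℝ X)
    (hγ0 : 0 ≤ γ) (hγ1 : γ < 1) {r e : X → ℝ} {R : ℝ} (hr : ∀ y, |r y| ≤ R)
    (hQP : ∀ x, ∑ y, |Q x y - P x y| ≤ e x) :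
    (1 - γ • P)⁻¹ *ᵥ (fun y => r y - γ * R / (1 - γ) * e y) ≤ (1 - γ • Q)⁻¹ *ᵥ r := by
  intro x
  set B := R / (1 - γ)
  have h1γ : 0 < 1 - γ := sub_pos.2 hγ1
  set V := (1 - γ • Q)⁻¹ *ᵥ r
  set Vadj := (1 - γ • P)⁻¹ *ᵥ (fun y => r y - γ * R / (1 - γ) * e y)
  have hV : V = γ • Q *ᵥ V + r :=
    eq_smul_mulVec_add_of_isUnit (isUnit_one_sub_smul_of_mem_rowStochastic hQ hγ0 hγ1) r
  have hVadj : Vadj = γ • P *ᵥ Vadj + fun y => r y - γ * B * e y := by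
    rw [← mul_div_assoc]
    exact eq_smul_mulVec_add_of_isUnit (isUnit_one_sub_smul_of_mem_rowStochastic hP hγ0 hγ1) _
  have hVB : ∀ y, |V y| ≤ B := fun y => (le_div_iff₀' h1γ).2
    (one_sub_mul_abs_le_of_eq_smul_mulVec_add hQ hγ0 hγ1.le hV hr y)
  have hB : 0 ≤ B := div_nonneg ((abs_nonneg _).trans (hr x)) h1γ.le
  have hdiff : V - Vadj = γ • P *ᵥ (V - Vadj) + γ • ((Q - P) *ᵥ V + B • e) := by
    ext y
    have hVy := congrFun hV y
    have hVadjy := congrFun hVadj y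
    simp only [Pi.add_apply, Pi.sub_apply, Pi.smul_apply, smul_eq_mul, mulVec_sub,
      sub_mulVec] at hVy hVadjy ⊢
    linear_combination hVy - hVadjy
  have hslack : ∀ y, 0 ≤ (γ • ((Q - P) *ᵥ V + B • e)) y := by
    intro y
    have h := (abs_mulVec_apply_le (Q - P) hVB y).trans (mul_le_mul_of_nonneg_right (hQP y) hB)
    simp only [Pi.smul_apply, Pi.add_apply, smul_eq_mul]
    nlinarith [neg_abs_le (((Q - P) *ᵥ V) y)]
  have hgap := le_one_sub_mul_of_eq_smul_mulVec_add hP hγ0 hγ1.le hdiff hslack x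
  exact sub_nonneg.1 (nonneg_of_mul_nonneg_right hgap h1γ)

end Matrix

theorem policy_kernel_mem_rowStochastic {X A : Type*} [Fintype X] [DecidableEq X]
    {ξ : X → A → X → ℝ} (hξ₀ : ∀ x a y, 0 ≤ ξ x a y) (hξ₁ : ∀ x a, ∑ y, ξ x a y = 1)
    (π : X → A) : Matrix.of (fun x y => ξ x (π x) y) ∈ rowStochastic ℝ X :=
  mem_rowStochastic_iff_sum.2 ⟨fun x y => hξ₀ x (π x) y, fun x => hξ₁ x (π x)⟩

theorem reward_adjusted_le_robust_general {X A : Type*} [Fintype X]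
    [DecidableEq X]
    (γ Rmax : ℝ) (hγ : γ ∈ Set.Ioo (0:ℝ) 1)
    (p0 : X → ℝ) (hp0 : (∀ x, 0 ≤ p0 x) ∧ ∑ x, p0 x = 1)
    (r : X → A → ℝ) (hr : ∀ x a, |r x a| ≤ Rmax)
    (Phat : X → A → X → ℝ)
    (hPhat : (∀ x a y, 0 ≤ Phat x a y) ∧ ∀ x a, ∑ y, Phat x a y = 1)
    (e : X → A → ℝ) (he : ∀ x a, 0 ≤ e x a)
    (Ξ : Set (X → A → X → ℝ))
    (hΞ : Ξ = {ξ | (∀ x a y, 0 ≤ ξ x a y) ∧ (∀ x a, ∑ y, ξ x a y = 1) ∧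
                   ∀ x a, ∑ y, |ξ x a y - Phat x a y| ≤ e x a})
    (π : X → A) :
    mdpReturn γ p0 (fun x a => r x a - γ * Rmax / (1 - γ) * e x a) π Phat
      ≤ sInf ((fun ξ => mdpReturn γ p0 r π ξ) '' Ξ) := by
  have hPhatΞ : Phat ∈ Ξ := hΞ ▸ ⟨hPhat.1, hPhat.2, fun x a => by simpa using he x a⟩
  refine le_csInf ((Set.nonempty_of_mem hPhatΞ).image _) ?_
  rintro _ ⟨ξ, hξ, rfl⟩
  rw [hΞ] at hξ
  obtain ⟨hξ₀, hξ₁, hξe⟩ := hξ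
  exact dotProduct_le_dotProduct_of_nonneg_left
    (inv_one_sub_smul_mulVec_le_of_sum_abs_sub_le (policy_kernel_mem_rowStochastic hPhat.1 hPhat.2 π)
      (policy_kernel_mem_rowStochastic hξ₀ hξ₁ π) hγ.1.le hγ.2 (fun x => hr x (π x))
      (fun x => hξe x (π x)))
    hp0.1

/-- the reward-adjusted return lower-bounds the robust return. -/
theorem reward_adjusted_le_robust {X A : Type*} [Fintype X] [Fintype A]
    [DecidableEq X] [Nonempty X] [Nonempty A]
    (γ Rmax : ℝ) (hγ : γ ∈ Set.Ioo (0:ℝ) 1) (hR : 0 ≤ Rmax)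
    (p0 : X → ℝ) (hp0 : (∀ x, 0 ≤ p0 x) ∧ ∑ x, p0 x = 1)
    (r : X → A → ℝ) (hr : ∀ x a, |r x a| ≤ Rmax)
    (Phat : X → A → X → ℝ)
    (hPhat : (∀ x a y, 0 ≤ Phat x a y) ∧ ∀ x a, ∑ y, Phat x a y = 1)
    (e : X → A → ℝ) (he : ∀ x a, 0 ≤ e x a)
    (Ξ : Set (X → A → X → ℝ))
    (hΞ : Ξ = {ξ | (∀ x a y, 0 ≤ ξ x a y) ∧ (∀ x a, ∑ y, ξ x a y = 1) ∧
                   ∀ x a, ∑ y, |ξ x a y - Phat x a y| ≤ e x a})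
    (π : X → A) :
    mdpReturn γ p0 (fun x a => r x a - γ * Rmax / (1 - γ) * e x a) π Phat
      ≤ sInf ((fun ξ => mdpReturn γ p0 r π ξ) '' Ξ) :=
  reward_adjusted_le_robust_general γ Rmax hγ p0 hp0 r hr Phat hPhat e he Ξ hΞ π
end

section
/- Under the assumption ‖P*(·|x,a) - P̂(·|x,a)‖_1 ≤ e(x,a) for all (x,a), for every policy π the reward-adjusted return lower-bounds the true return: ρ(π, ξ̃) ≤ ρ(π, P*), where ξ̃ has transitions P̂ and rewards r̂(x,a) = r(x,a) - (γR_max/(1-γ)) e(x,a). -/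
/-!
Let `V*` be the true value of `π`. The Bellman equation `V* = r + γ P* V*` gives
`(1 - γ P̂) V* = r + γ (P* - P̂) V*`, and since `‖V*‖∞ ≤ R_max / (1 - γ)` the perturbation term
is at least `-(γ R_max / (1 - γ)) e = r̂ - r`. So `r̂ ≤ (1 - γ P̂) V*`, and the comparison principle
for `1 - γ P̂` (a discrete maximum principle, valid since `P̂` is stochastic and `γ < 1`) yields
`V̂ ≤ V*`; integrating against `p0 ≥ 0` gives the claim.
-/

open Matrix

namespace Matrix

lemma abs_mulVec_sub_mulVec_le {m n : Type*} [Fintype n] (P Q : Matrix m n ℝ) {v : n → ℝ}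
    {B : ℝ} (hv : ∀ y, |v y| ≤ B) (x : m) :
    |(P *ᵥ v) x - (Q *ᵥ v) x| ≤ (∑ y, |P x y - Q x y|) * B := by
  simp only [mulVec, dotProduct, ← Finset.sum_sub_distrib, ← sub_mul, Finset.sum_mul]
  refine (Finset.abs_sum_le_sum_abs _ _).trans (Finset.sum_le_sum fun y _ => ?_)
  rw [abs_mul]
  exact mul_le_mul_of_nonneg_left (hv y) (abs_nonneg _)

variable {X : Type*} [Fintype X] [DecidableEq X]

lemma one_sub_smul_mulVec_apply (γ : ℝ) (P : Matrix X X ℝ) (w : X → ℝ) (x : X) :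
    ((1 - γ • P) *ᵥ w) x = w x - γ * ∑ y, P x y * w y := by
  rw [sub_mulVec, one_mulVec, smul_mulVec]
  rfl

lemma penalized_le_one_sub_smul_mulVec {γ B : ℝ} (hγ : 0 ≤ γ) {P Q : Matrix X X ℝ}
    {v r e : X → ℝ} (hv : ∀ y, |v y| ≤ B) (hB : 0 ≤ B) (he : ∀ x, ∑ y, |P x y - Q x y| ≤ e x)
    (hPv : (1 - γ • P) *ᵥ v = r) :
    (fun x => r x - γ * B * e x) ≤ (1 - γ • Q) *ᵥ v := by
  intro x
  have hPvx := congrFun hPv x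
  have hperturb := (abs_mulVec_sub_mulVec_le P Q hv x).trans (mul_le_mul_of_nonneg_right (he x) hB)
  simp only [mulVec, dotProduct] at hperturb
  have := mul_le_mul_of_nonneg_left (neg_le_of_abs_le hperturb) hγ
  rw [one_sub_smul_mulVec_apply] at hPvx ⊢
  linarith

section Substochastic

variable {γ : ℝ} {P : Matrix X X ℝ} (hγ0 : 0 ≤ γ) (hγ1 : γ < 1)
  (hP0 : ∀ i j, 0 ≤ P i j) (hP1 : ∀ i, ∑ j, P i j ≤ 1)
include hγ0 hγ1 hP0 hP1

/-- Evaluate the hypothesis at a minimum point `x₀` of `w`: there `P w ≥ w x₀`, so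
`w x₀ ≥ γ (P w) x₀ ≥ γ w x₀` whenever `w x₀ < 0`. -/
lemma nonneg_of_one_sub_smul_mulVec_nonneg {w : X → ℝ} (hw : 0 ≤ (1 - γ • P) *ᵥ w) :
    0 ≤ w := by
  intro x
  have : Nonempty X := ⟨x⟩
  obtain ⟨x₀, hmin⟩ := Finite.exists_min w
  suffices 0 ≤ w x₀ from this.trans (hmin x)
  have hx₀ := hw x₀
  rw [Pi.zero_apply, one_sub_smul_mulVec_apply] at hx₀
  by_contra! hneg
  have hmean : w x₀ ≤ ∑ y, P x₀ y * w y :=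
    calc w x₀ ≤ (∑ y, P x₀ y) * w x₀ := by nlinarith [hP1 x₀]
      _ = ∑ y, P x₀ y * w x₀ := Finset.sum_mul _ _ _
      _ ≤ ∑ y, P x₀ y * w y :=
        Finset.sum_le_sum fun y _ => mul_le_mul_of_nonneg_left (hmin y) (hP0 x₀ y)
  nlinarith

lemma isUnit_det_one_sub_smul : IsUnit (1 - γ • P).det := by
  rw [← isUnit_iff_isUnit_det, ← mulVec_injective_iff_isUnit]
  intro u v huv
  have hle : 0 ≤ u - v := nonneg_of_one_sub_smul_mulVec_nonneg hγ0 hγ1 hP0 hP1 <| by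
    rw [mulVec_sub, huv, sub_self]
  have hge : 0 ≤ v - u := nonneg_of_one_sub_smul_mulVec_nonneg hγ0 hγ1 hP0 hP1 <| by
    rw [mulVec_sub, huv, sub_self]
  exact le_antisymm (sub_nonneg.mp hge) (sub_nonneg.mp hle)

lemma one_sub_smul_mulVec_inv_mulVec (r : X → ℝ) :
    (1 - γ • P) *ᵥ ((1 - γ • P)⁻¹ *ᵥ r) = r := by
  rw [mulVec_mulVec, mul_nonsing_inv _ (isUnit_det_one_sub_smul hγ0 hγ1 hP0 hP1), one_mulVec]

lemma inv_one_sub_smul_mulVec_le {r w : X → ℝ} (h : r ≤ (1 - γ • P) *ᵥ w) :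
    (1 - γ • P)⁻¹ *ᵥ r ≤ w := by
  refine sub_nonneg.mp (nonneg_of_one_sub_smul_mulVec_nonneg hγ0 hγ1 hP0 hP1 ?_)
  rwa [mulVec_sub, one_sub_smul_mulVec_inv_mulVec hγ0 hγ1 hP0 hP1, sub_nonneg]

/-- The constant vector `R / (1 - γ)` is a supersolution for every `r` with `|r| ≤ R`. -/
lemma abs_inv_one_sub_smul_mulVec_le {r : X → ℝ} {R : ℝ} (hr : ∀ x, |r x| ≤ R) (x : X) :
    |((1 - γ • P)⁻¹ *ᵥ r) x| ≤ R / (1 - γ) := by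
  have hR : 0 ≤ R := (abs_nonneg _).trans (hr x)
  have hsuper : ∀ y, R ≤ ((1 - γ • P) *ᵥ fun _ => R / (1 - γ)) y := by
    intro y
    rw [one_sub_smul_mulVec_apply, ← Finset.sum_mul]
    have hc : 0 ≤ R / (1 - γ) := div_nonneg hR (sub_pos.mpr hγ1).le
    have hRc : (1 - γ) * (R / (1 - γ)) = R := mul_div_cancel₀ R (sub_pos.mpr hγ1).ne'
    have := mul_le_mul_of_nonneg_left (mul_le_mul_of_nonneg_right (hP1 y) hc) hγ0
    linarith
  have hup := inv_one_sub_smul_mulVec_le hγ0 hγ1 hP0 hP1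
    (r := r) fun y => (le_abs_self _).trans ((hr y).trans (hsuper y))
  have hlow := inv_one_sub_smul_mulVec_le hγ0 hγ1 hP0 hP1
    (r := -r) fun y => (neg_le_abs _).trans ((hr y).trans (hsuper y))
  rw [mulVec_neg] at hlow
  exact abs_le.mpr ⟨neg_le.mp (hlow x), hup x⟩

end Substochastic

end Matrix

theorem reward_adjusted_le_true_general {X A : Type*} [Fintype X]
    [DecidableEq X]
    (γ Rmax : ℝ) (hγ : γ ∈ Set.Ioo (0:ℝ) 1) (hR : 0 ≤ Rmax)
    (p0 : X → ℝ) (hp0 : (∀ x, 0 ≤ p0 x) ∧ ∑ x, p0 x = 1)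
    (r : X → A → ℝ) (hr : ∀ x a, |r x a| ≤ Rmax)
    (Pstar Phat : X → A → X → ℝ)
    (hPstar : (∀ x a y, 0 ≤ Pstar x a y) ∧ ∀ x a, ∑ y, Pstar x a y = 1)
    (hPhat : (∀ x a y, 0 ≤ Phat x a y) ∧ ∀ x a, ∑ y, Phat x a y = 1)
    (e : X → A → ℝ)
    (hdist : ∀ x a, ∑ y, |Pstar x a y - Phat x a y| ≤ e x a)
    (π : X → A) :
    mdpReturn γ p0 (fun x a => r x a - γ * Rmax / (1 - γ) * e x a) π Phat
      ≤ mdpReturn γ p0 r π Pstar := by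
  obtain ⟨hγ0, hγ1⟩ := hγ
  set Ps : Matrix X X ℝ := Matrix.of fun x y => Pstar x (π x) y
  set Ph : Matrix X X ℝ := Matrix.of fun x y => Phat x (π x) y
  have hPs0 : ∀ i j, 0 ≤ Ps i j := fun i j => hPstar.1 i (π i) j
  have hPs1 : ∀ i, ∑ j, Ps i j ≤ 1 := fun i => (hPstar.2 i (π i)).le
  have hPh0 : ∀ i j, 0 ≤ Ph i j := fun i j => hPhat.1 i (π i) j
  have hPh1 : ∀ i, ∑ j, Ph i j ≤ 1 := fun i => (hPhat.2 i (π i)).le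
  set V := (1 - γ • Ps)⁻¹ *ᵥ fun x => r x (π x)
  have hV : ∀ x, |V x| ≤ Rmax / (1 - γ) :=
    abs_inv_one_sub_smul_mulVec_le hγ0.le hγ1 hPs0 hPs1 fun x => hr x (π x)
  have hsuper := penalized_le_one_sub_smul_mulVec hγ0.le hV
    (div_nonneg hR (sub_pos.mpr hγ1).le) (fun x => hdist x (π x))
    (one_sub_smul_mulVec_inv_mulVec hγ0.le hγ1 hPs0 hPs1 fun x => r x (π x))
  rw [← mul_div_assoc] at hsuper
  exact dotProduct_le_dotProduct_of_nonneg_left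
    (inv_one_sub_smul_mulVec_le hγ0.le hγ1 hPh0 hPh1 hsuper) hp0.1

/-- the reward-adjusted return lower-bounds the true return. -/
theorem reward_adjusted_le_true {X A : Type*} [Fintype X] [Fintype A]
    [DecidableEq X] [Nonempty X] [Nonempty A]
    (γ Rmax : ℝ) (hγ : γ ∈ Set.Ioo (0:ℝ) 1) (hR : 0 ≤ Rmax)
    (p0 : X → ℝ) (hp0 : (∀ x, 0 ≤ p0 x) ∧ ∑ x, p0 x = 1)
    (r : X → A → ℝ) (hr : ∀ x a, |r x a| ≤ Rmax)
    (Pstar Phat : X → A → X → ℝ)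
    (hPstar : (∀ x a y, 0 ≤ Pstar x a y) ∧ ∀ x a, ∑ y, Pstar x a y = 1)
    (hPhat : (∀ x a y, 0 ≤ Phat x a y) ∧ ∀ x a, ∑ y, Phat x a y = 1)
    (e : X → A → ℝ) (he : ∀ x a, 0 ≤ e x a)
    (hdist : ∀ x a, ∑ y, |Pstar x a y - Phat x a y| ≤ e x a)
    (π : X → A) :
    mdpReturn γ p0 (fun x a => r x a - γ * Rmax / (1 - γ) * e x a) π Phat
      ≤ mdpReturn γ p0 r π Pstar :=
  reward_adjusted_le_true_general γ Rmax hγ hR p0 hp0 r hr Pstar Phat hPstar hPhat e hdist π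
end
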